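/- arXiv:1901.10835 — 6 statements merged into one kernel-verified Lean document; each statement's English description precedes it below -/
import Mathlib

section
/- Let g₀ : [0,∞) → ℝ be continuous with g₀(t) → 0 as t → ∞ and g₀(t) ≠ 0 for every t ≥ 0, let u : ℝ → ℝ be measurable and bounded, let t₁,…,t_N > 0 and c ∈ ℝ^N, and suppose g₀(τ) ≠ 0 for (Lebesgue-)almost every τ ∈ [0, max_i t_i]. Define ĝ(t) = Σ_{i=1}^N c_i ∫₀^{t_i} u(t_i − τ) min(|g₀(τ)|, |g₀(t)|) dτ and let U ∈ ℝ^N have entries U_i = ∫₀^{t_i} u(t_i − τ) dτ. Then ĝ(t)/|g₀(t)| → Uᵀc as t → ∞. -/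
open MeasureTheory Filter

/-- If `g₀` is continuous on `[0,∞)` with `g₀(t) → 0` as `t → ∞` and
`g₀(t) ≠ 0` for all `t ≥ 0`, `u` is measurable and bounded, `g₀ ≠ 0` a.e. on `[0, maxᵢ tᵢ]`,
`ĝ(t) = Σᵢ cᵢ ∫₀^{tᵢ} u(tᵢ-τ) min(|g₀(τ)|,|g₀(t)|) dτ` and `Uᵢ = ∫₀^{tᵢ} u(tᵢ-τ) dτ`,
then `ĝ(t)/|g₀(t)| → Uᵀc` as `t → ∞`. -/
theorem stmt_9 (g₀ : ℝ → ℝ) (hg₀cont : ContinuousOn g₀ (Set.Ici 0))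
    (hg₀lim : Tendsto g₀ atTop (nhds 0))
    (hg₀ne : ∀ t : ℝ, 0 ≤ t → g₀ t ≠ 0)
    (u : ℝ → ℝ) (humeas : Measurable u) (M : ℝ) (hM : ∀ t : ℝ, |u t| ≤ M)
    (N : ℕ) (hN : 0 < N) (ts : Fin N → ℝ) (hts : ∀ i, 0 < ts i) (c : Fin N → ℝ)
    (hae : ∀ᵐ τ ∂(volume : Measure ℝ),
      τ ∈ Set.Icc (0 : ℝ) (Finset.univ.sup' (Finset.univ_nonempty_iff.mpr ⟨⟨0, hN⟩⟩) ts) →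
        g₀ τ ≠ 0) :
    Tendsto (fun t : ℝ =>
        (∑ i : Fin N, c i * ∫ τ in (0 : ℝ)..(ts i), u (ts i - τ) * min |g₀ τ| |g₀ t|)
          / |g₀ t|)
      atTop
      (nhds (∑ i : Fin N, (∫ τ in (0 : ℝ)..(ts i), u (ts i - τ)) * c i)) := by
  set T := Finset.univ.sup' (Finset.univ_nonempty_iff.mpr ⟨⟨0, hN⟩⟩) ts with hTdef
  have hleT : ∀ i, ts i ≤ T := fun i => Finset.le_sup' ts (Finset.mem_univ i)
  have hT0 : (0 : ℝ) ≤ T := le_trans (hts ⟨0, hN⟩).le (hleT ⟨0, hN⟩)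
  have hcont : ContinuousOn (fun x => |g₀ x|) (Set.Icc (0 : ℝ) T) :=
    (hg₀cont.mono (Set.Icc_subset_Ici_self)).abs
  obtain ⟨τ₀, hτ₀mem, hτ₀min⟩ :=
    (isCompact_Icc : IsCompact (Set.Icc (0 : ℝ) T)).exists_isMinOn ⟨0, le_refl 0, hT0⟩ hcont
  have hε : (0 : ℝ) < |g₀ τ₀| := abs_pos.mpr (hg₀ne τ₀ hτ₀mem.1)
  have habs : Tendsto (fun t => |g₀ t|) atTop (nhds 0) := by
    have := hg₀lim.abs
    simpa using this
  apply Tendsto.congr' _ tendsto_const_nhds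
  filter_upwards [eventually_ge_atTop (0 : ℝ), habs.eventually_lt_const hε] with t ht0 htε
  have hne : |g₀ t| ≠ 0 := abs_ne_zero.mpr (hg₀ne t ht0)
  have key : ∀ i : Fin N, (∫ τ in (0 : ℝ)..(ts i), u (ts i - τ) * min |g₀ τ| |g₀ t|)
      = (∫ τ in (0 : ℝ)..(ts i), u (ts i - τ)) * |g₀ t| := by
    intro i
    rw [← intervalIntegral.integral_mul_const]
    apply intervalIntegral.integral_congr
    intro τ hτ
    rw [Set.uIcc_of_le (hts i).le] at hτ
    have h1 : |g₀ t| ≤ |g₀ τ| :=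
      le_trans htε.le (hτ₀min ⟨hτ.1, hτ.2.trans (hleT i)⟩)
    simp [min_eq_right h1]
  simp only [key, ← mul_assoc, ← Finset.sum_mul, mul_div_assoc, div_self hne, mul_one]
  exact Eq.symm (Finset.sum_congr rfl fun i _ => mul_comm _ _)
end

section
/- Let n ≥ 1, let g : {1,…,n} → ℝ take positive pairwise distinct values, and let σ be a permutation of {1,…,n} such that 0 < g(σ(1)) < g(σ(2)) < ⋯ < g(σ(n)). Then the n×n matrix K with entries K_{ij} = min(g(i), g(j)) satisfies det(K) = g(σ(1)) · Π_{k=1}^{n−1} (g(σ(k+1)) − g(σ(k))). -/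
/-!
Once the points are sorted, `min (g i) (g j) = h (min i j)` with `h = g ∘ σ` monotone. Writing
`h` as cumulative sums of its increments `d`, the matrix `h (min i j) = ∑_{k ≤ i, k ≤ j} d k`
is `L * diagonal d * Lᵀ` with `L` the lower unitriangular matrix of ones, so its determinant
is `∏ d k`.
-/

open Matrix Finset

variable {R : Type*} [CommRing R] {n : ℕ}

def Fin.diffs (h : Fin (n + 1) → R) : Fin (n + 1) → R :=
  Fin.cons (h 0) fun k => h k.succ - h k.castSucc

theorem Fin.sum_Iic_diffs (h : Fin (n + 1) → R) (m : Fin (n + 1)) :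
    ∑ k ∈ Iic m, Fin.diffs h k = h m := by
  induction m using Fin.induction with
  | zero => rw [← bot_eq_zero, Iic_bot, sum_singleton, bot_eq_zero]; rfl
  | succ m ih =>
    have hIio : Iio m.succ = Iic m.castSucc := by
      ext k; simp [Fin.lt_def, Fin.le_def]
    rw [Iic_eq_cons_Iio, Finset.sum_cons, hIio, ih]
    simp [Fin.diffs]

def lowerOnes (ι : Type*) [LinearOrder ι] : Matrix ι ι R :=
  of fun i k => if k ≤ i then 1 else 0

theorem det_lowerOnes (ι : Type*) [Fintype ι] [LinearOrder ι] :
    (lowerOnes ι : Matrix ι ι R).det = 1 := by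
  rw [det_of_isLowerTriangular (lowerOnes ι) fun i j hij => if_neg (not_le.mpr hij)]
  simp [lowerOnes]

theorem of_apply_min_eq_lowerOnes_mul (h : Fin (n + 1) → R) :
    of (fun i j => h (min i j)) =
      lowerOnes (Fin (n + 1)) * diagonal (Fin.diffs h) * (lowerOnes (Fin (n + 1)))ᵀ := by
  ext i j
  rw [of_apply, ← Fin.sum_Iic_diffs h, mul_apply]
  simp only [mul_diagonal, lowerOnes, transpose_apply, of_apply, ite_mul, one_mul, zero_mul,
    mul_ite, mul_one, mul_zero, ← ite_and, ← le_min_iff]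
  rw [← sum_filter, filter_ge_eq_Iic, min_comm]

theorem det_of_apply_min (h : Fin (n + 1) → R) :
    (of fun i j => h (min i j)).det = h 0 * ∏ k : Fin n, (h k.succ - h k.castSucc) := by
  rw [of_apply_min_eq_lowerOnes_mul, det_mul, det_mul, det_transpose, det_lowerOnes,
    det_diagonal, Fin.prod_univ_succ]
  simp [Fin.diffs]

theorem stmt_11_general (n : ℕ) (g : Fin (n + 1) → ℝ)
    (σ : Equiv.Perm (Fin (n + 1))) (hmono : StrictMono (fun k => g (σ k))) :
    (Matrix.of fun i j : Fin (n + 1) => min (g i) (g j)).det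
      = g (σ 0) * ∏ k : Fin n, (g (σ k.succ) - g (σ k.castSucc)) := by
  have hsorted : (of fun i j => min (g i) (g j)).submatrix σ σ =
      of fun i j => (g ∘ σ) (min i j) := by
    ext i j
    exact (hmono.monotone.map_min).symm
  rw [← det_submatrix_equiv_self σ, hsorted, det_of_apply_min]
  rfl

/-- For `n ≥ 1` (here matrix size `n+1`), if `g` takes positive pairwise-distinct
values and `σ` is a permutation sorting them increasingly, `0 < g(σ(1)) < ⋯ < g(σ(n))`, then
the Gram matrix `K_{ij} = min(g(i), g(j))` has determinant
`g(σ(1)) · Π_k (g(σ(k+1)) − g(σ(k)))`. -/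
theorem stmt_11 (n : ℕ) (g : Fin (n + 1) → ℝ) (hpos : ∀ i, 0 < g i)
    (hinj : Function.Injective g)
    (σ : Equiv.Perm (Fin (n + 1))) (hmono : StrictMono (fun k => g (σ k))) :
    (Matrix.of fun i j : Fin (n + 1) => min (g i) (g j)).det
      = g (σ 0) * ∏ k : Fin n, (g (σ k.succ) - g (σ k.castSucc)) :=
  stmt_11_general n g σ hmono
end

section
/- Let n ≥ 2, let g : {1,…,n} → ℝ take positive pairwise distinct values, and let σ be a permutation of {1,…,n} with h_k := g(σ(k)) satisfying 0 < h₁ < h₂ < ⋯ < h_n. Let R be the n×n permutation matrix with (Rv)_k = v_{σ(k)}, and define the tridiagonal matrix P ∈ ℝ^{n×n} by P_{11} = h₂/(h₁(h₂−h₁)), P_{kk} = (h_{k+1}−h_{k−1})/((h_{k+1}−h_k)(h_k−h_{k−1})) for 2 ≤ k ≤ n−1, P_{nn} = 1/(h_n−h_{n−1}), P_{k,k+1} = P_{k+1,k} = −1/(h_{k+1}−h_k) for 1 ≤ k ≤ n−1, and P_{ij} = 0 for |i−j| > 1. Then the n×n matrix K with entries K_{ij} = min(g(i), g(j)) is invertible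 with K^{−1} = Rᵀ P R. -/
/-!
Sort the points: `h_k = g(σ k)`. For a function `φ`, the `k`-th column of `P` tested against the
samples `φ(h_j)` is the jump of slopes of `φ` at `h_k`: the slope on `[h_{k-1}, h_k]` minus the
slope on `[h_k, h_{k+1}]`, with `h_{-1} = 0` for the first column and no right-hand slope for the
last one. For `φ = min(h_i, ·)` consecutive slopes are `1` left of `h_i` and `0` right of it,
so the jump is `1` exactly at `k = i`: the sorted Gram matrix times `P` is the identity.
Conjugating by the permutation matrix `R` turns the sorted Gram matrix into the original one.
-/


open Matrix

/-- The sorted values `h_k = g(σ(k))` (0-indexed, size `n+2`), extended by 0 outside. -/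
noncomputable def sortedVals (n : ℕ) (g : Fin (n + 2) → ℝ) (σ : Equiv.Perm (Fin (n + 2))) (k : ℕ) : ℝ :=
  if hk : k < n + 2 then g (σ ⟨k, hk⟩) else 0

/-- The tridiagonal matrix `P` (inverse of the Gram matrix of the first-order spline kernel
at the sorted points): 0-indexed version of the matrix in STATEMENT 12. -/
noncomputable def Pmat (n : ℕ) (g : Fin (n + 2) → ℝ) (σ : Equiv.Perm (Fin (n + 2))) :
    Matrix (Fin (n + 2)) (Fin (n + 2)) ℝ :=
  Matrix.of fun i j =>
    if (i : ℕ) = (j : ℕ) then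
      if (i : ℕ) = 0 then
        sortedVals n g σ 1 / (sortedVals n g σ 0 * (sortedVals n g σ 1 - sortedVals n g σ 0))
      else if (i : ℕ) = n + 1 then
        1 / (sortedVals n g σ (n + 1) - sortedVals n g σ n)
      else
        (sortedVals n g σ ((i : ℕ) + 1) - sortedVals n g σ ((i : ℕ) - 1)) /
          ((sortedVals n g σ ((i : ℕ) + 1) - sortedVals n g σ (i : ℕ)) *
            (sortedVals n g σ (i : ℕ) - sortedVals n g σ ((i : ℕ) - 1)))
    else if (i : ℕ) + 1 = (j : ℕ) then
      -(1 / (sortedVals n g σ (j : ℕ) - sortedVals n g σ (i : ℕ)))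
    else if (j : ℕ) + 1 = (i : ℕ) then
      -(1 / (sortedVals n g σ (i : ℕ) - sortedVals n g σ (j : ℕ)))
    else 0

/-- The permutation matrix `R` of `σ`, satisfying `(R v)_k = v_{σ(k)}`. -/
noncomputable def Rmat (n : ℕ) (σ : Equiv.Perm (Fin (n + 2))) : Matrix (Fin (n + 2)) (Fin (n + 2)) ℝ :=
  Matrix.of fun i j => if j = σ i then 1 else 0

section SlopeMin

variable {𝕜 : Type*} [Field 𝕜] [LinearOrder 𝕜] {x a b : 𝕜}

lemma slope_min_of_le (ha : a ≤ x) (hb : b ≤ x) (hab : a ≠ b) : slope (min x) a b = 1 := by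
  rw [slope_def_field, min_eq_right ha, min_eq_right hb, div_self (sub_ne_zero.2 hab.symm)]

lemma slope_min_of_ge (ha : x ≤ a) (hb : x ≤ b) : slope (min x) a b = 0 := by
  rw [slope_def_field, min_eq_left ha, min_eq_left hb, sub_self, zero_div]

end SlopeMin

section SortedGram

variable {n : ℕ} {g : Fin (n + 2) → ℝ} {σ : Equiv.Perm (Fin (n + 2))}

lemma sortedVals_val (j : Fin (n + 2)) : sortedVals n g σ j = g (σ j) := by
  simp [sortedVals]

lemma sortedVals_pos (hpos : ∀ i, 0 < g i) {a : ℕ} (ha : a < n + 2) :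
    0 < sortedVals n g σ a := by
  simp only [sortedVals, dif_pos ha]
  exact hpos _

lemma sortedVals_lt_sortedVals (hmono : StrictMono fun k => g (σ k)) {a b : ℕ} (hab : a < b)
    (hb : b < n + 2) : sortedVals n g σ a < sortedVals n g σ b := by
  simp only [sortedVals, dif_pos (hab.trans hb), dif_pos hb]
  exact hmono (Fin.mk_lt_mk.2 hab)

lemma sortedVals_le_sortedVals (hmono : StrictMono fun k => g (σ k)) {a b : ℕ} (hab : a ≤ b)
    (hb : b < n + 2) : sortedVals n g σ a ≤ sortedVals n g σ b := by
  rcases hab.eq_or_lt with rfl | hab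
  · rfl
  · exact (sortedVals_lt_sortedVals hmono hab hb).le

lemma slope_min_sortedVals_succ (hmono : StrictMono fun k => g (σ k)) {i a : ℕ}
    (hi : i < n + 2) (ha : a + 1 < n + 2) :
    slope (min (sortedVals n g σ i)) (sortedVals n g σ a) (sortedVals n g σ (a + 1)) =
      if a < i then 1 else 0 := by
  split_ifs with hai
  · exact slope_min_of_le (sortedVals_le_sortedVals hmono (by omega) hi)
      (sortedVals_le_sortedVals hmono hai hi) (sortedVals_lt_sortedVals hmono (by omega) ha).ne
  · exact slope_min_of_ge (sortedVals_le_sortedVals hmono (by omega) (by omega))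
      (sortedVals_le_sortedVals hmono (by omega) ha)

lemma Pmat_apply_eq_zero {i j : Fin (n + 2)} (hij : (i : ℕ) ≠ j) (hij' : (i : ℕ) + 1 ≠ j)
    (hji : (j : ℕ) + 1 ≠ i) : Pmat n g σ i j = 0 := by
  simp [Pmat, hij, hij', hji]

lemma sum_mul_Pmat_zero (hpos : ∀ i, 0 < g i) (hmono : StrictMono fun k => g (σ k))
    (φ : ℝ → ℝ) :
    ∑ j : Fin (n + 2), φ (sortedVals n g σ (j : ℕ)) * Pmat n g σ j 0 =
      φ (sortedVals n g σ 0) / sortedVals n g σ 0 -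
        slope φ (sortedVals n g σ 0) (sortedVals n g σ 1) := by
  have h₀ := (sortedVals_pos hpos (σ := σ) (show 0 < n + 2 by omega)).ne'
  have h₁ := (sub_pos.2 (sortedVals_lt_sortedVals hmono (show 0 < 1 by omega) (by omega))).ne'
  have hP₀ : Pmat n g σ 0 0 =
      sortedVals n g σ 1 /
        (sortedVals n g σ 0 * (sortedVals n g σ 1 - sortedVals n g σ 0)) := by
    simp [Pmat]
  have hP₁ : Pmat n g σ 1 0 = -(1 / (sortedVals n g σ 1 - sortedVals n g σ 0)) := by
    simp [Pmat]
  rw [← Finset.sum_subset (Finset.subset_univ {0, 1}), Finset.sum_pair Fin.zero_ne_one,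
    slope_def_field]
  · rw [hP₀, hP₁, Fin.val_zero, Fin.val_one]
    field_simp
    ring
  · intro j _ hj
    simp only [Finset.mem_insert, Finset.mem_singleton, not_or, Fin.ext_iff] at hj
    rw [Pmat_apply_eq_zero (by simpa using hj.1) (by simp) (by simpa [eq_comm] using hj.2),
      mul_zero]

lemma sum_mul_Pmat_last (hmono : StrictMono fun k => g (σ k)) (φ : ℝ → ℝ) :
    ∑ j : Fin (n + 2), φ (sortedVals n g σ (j : ℕ)) * Pmat n g σ j (Fin.last (n + 1)) =
      slope φ (sortedVals n g σ n) (sortedVals n g σ (n + 1)) := by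
  have h₁ := (sub_pos.2 (sortedVals_lt_sortedVals hmono (Nat.lt_succ_self n) (by omega))).ne'
  have hP₀ : Pmat n g σ (Fin.last n).castSucc (Fin.last (n + 1)) =
      -(1 / (sortedVals n g σ (n + 1) - sortedVals n g σ n)) := by
    simp [Pmat]
  have hP₁ : Pmat n g σ (Fin.last (n + 1)) (Fin.last (n + 1)) =
      1 / (sortedVals n g σ (n + 1) - sortedVals n g σ n) := by
    simp [Pmat]
  rw [← Finset.sum_subset (Finset.subset_univ {(Fin.last n).castSucc, Fin.last (n + 1)}),
    Finset.sum_pair (Fin.castSucc_lt_last _).ne, slope_def_field]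
  · rw [hP₀, hP₁, Fin.val_castSucc, Fin.val_last, Fin.val_last]
    field_simp
    ring
  · intro j _ hj
    simp only [Finset.mem_insert, Finset.mem_singleton, not_or, Fin.ext_iff] at hj
    rw [Pmat_apply_eq_zero (by simpa using hj.2) (by simpa using hj.1) (by simp; omega), mul_zero]

lemma sum_mul_Pmat_of_lt (hmono : StrictMono fun k => g (σ k)) (φ : ℝ → ℝ) {m : ℕ}
    (hm : m < n) :
    ∑ j : Fin (n + 2), φ (sortedVals n g σ (j : ℕ)) * Pmat n g σ j ⟨m + 1, by omega⟩ =
      slope φ (sortedVals n g σ m) (sortedVals n g σ (m + 1)) -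
        slope φ (sortedVals n g σ (m + 1)) (sortedVals n g σ (m + 2)) := by
  have h₁ := (sub_pos.2 (sortedVals_lt_sortedVals hmono (Nat.lt_succ_self m) (by omega))).ne'
  have h₂ :=
    (sub_pos.2 (sortedVals_lt_sortedVals hmono (Nat.lt_succ_self (m + 1)) (by omega))).ne'
  have hP₀ : Pmat n g σ ⟨m, by omega⟩ ⟨m + 1, by omega⟩ =
      -(1 / (sortedVals n g σ (m + 1) - sortedVals n g σ m)) := by
    simp [Pmat]
  have hP₁ : Pmat n g σ ⟨m + 1, by omega⟩ ⟨m + 1, by omega⟩ =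
      (sortedVals n g σ (m + 2) - sortedVals n g σ m) /
        ((sortedVals n g σ (m + 2) - sortedVals n g σ (m + 1)) *
          (sortedVals n g σ (m + 1) - sortedVals n g σ m)) := by
    simp [Pmat, hm.ne]
  have hP₂ : Pmat n g σ ⟨m + 2, by omega⟩ ⟨m + 1, by omega⟩ =
      -(1 / (sortedVals n g σ (m + 2) - sortedVals n g σ (m + 1))) := by
    simp [Pmat]
  rw [← Finset.sum_subset
      (Finset.subset_univ {⟨m, by omega⟩, ⟨m + 1, by omega⟩, ⟨m + 2, by omega⟩}),
    Finset.sum_insert (by simp [Fin.ext_iff]), Finset.sum_pair (by simp [Fin.ext_iff]),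
    slope_def_field, slope_def_field]
  · rw [hP₀, hP₁, hP₂]
    field_simp
    ring
  · intro j _ hj
    simp only [Finset.mem_insert, Finset.mem_singleton, not_or, Fin.ext_iff] at hj
    rw [Pmat_apply_eq_zero (by simpa using hj.2.1) (by simp; omega) (by simp; omega), mul_zero]

lemma sortedGram_mul_Pmat (hpos : ∀ i, 0 < g i) (hmono : StrictMono fun k => g (σ k)) :
    (of fun i j : Fin (n + 2) => min (g (σ i)) (g (σ j))) * Pmat n g σ = 1 := by
  ext i ⟨_ | m, hk⟩ <;>
    simp only [mul_apply, of_apply, one_apply, Fin.ext_iff, ← sortedVals_val]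
  · rw [show (⟨0, hk⟩ : Fin (n + 2)) = 0 from rfl, sum_mul_Pmat_zero hpos hmono,
      slope_min_sortedVals_succ hmono i.isLt (by omega),
      min_eq_right (sortedVals_le_sortedVals hmono (Nat.zero_le _) i.isLt),
      div_self (sortedVals_pos hpos (by omega)).ne']
    split_ifs <;> norm_num <;> omega
  rcases (by omega : m < n ∨ m = n) with hm | rfl
  · rw [sum_mul_Pmat_of_lt hmono _ hm, slope_min_sortedVals_succ hmono i.isLt (by omega),
      slope_min_sortedVals_succ hmono i.isLt (by omega)]
    split_ifs <;> norm_num <;> omega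
  · have hi := i.isLt
    rw [show (⟨m + 1, hk⟩ : Fin (m + 2)) = Fin.last (m + 1) from rfl, sum_mul_Pmat_last hmono,
      slope_min_sortedVals_succ hmono hi (by omega)]
    split_ifs <;> norm_num <;> omega

end SortedGram

lemma Rmat_eq_permMatrix {n : ℕ} (σ : Equiv.Perm (Fin (n + 2))) :
    Rmat n σ = σ.permMatrix ℝ := by
  ext i j
  simp [Rmat, PEquiv.toMatrix_apply, eq_comm]

lemma transpose_Rmat_mul_mul_Rmat {n : ℕ} (σ : Equiv.Perm (Fin (n + 2)))
    (M : Matrix (Fin (n + 2)) (Fin (n + 2)) ℝ) :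
    (Rmat n σ)ᵀ * M * Rmat n σ = M.submatrix σ.symm σ.symm := by
  rw [Rmat_eq_permMatrix, transpose_permMatrix, PEquiv.toMatrix_toPEquiv_mul,
    PEquiv.mul_toMatrix_toPEquiv, submatrix_submatrix]
  rfl

theorem stmt_12_general (n : ℕ) (g : Fin (n + 2) → ℝ) (hpos : ∀ i, 0 < g i)
    (σ : Equiv.Perm (Fin (n + 2))) (hmono : StrictMono (fun k => g (σ k))) :
    IsUnit (Matrix.of fun i j : Fin (n + 2) => min (g i) (g j)) ∧
    (Matrix.of fun i j : Fin (n + 2) => min (g i) (g j))⁻¹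
      = (Rmat n σ)ᵀ * Pmat n g σ * Rmat n σ := by
  have hK : (of fun i j : Fin (n + 2) => min (g i) (g j)) =
      (of fun i j => min (g (σ i)) (g (σ j))).submatrix σ.symm σ.symm := by
    ext
    simp
  have hP := sortedGram_mul_Pmat hpos hmono
  rw [hK, isUnit_submatrix_equiv, inv_submatrix_equiv, inv_eq_right_inv hP,
    transpose_Rmat_mul_mul_Rmat]
  exact ⟨(isUnit_iff_isUnit_det _).2 (isUnit_det_of_right_inverse hP), rfl⟩

/-- For `n ≥ 2` (here matrix size `n+2`), if `g` takes positive pairwise-distinct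
values and `σ` sorts them increasingly, then the Gram matrix `K_{ij} = min(g(i), g(j))` is
invertible with `K⁻¹ = Rᵀ P R`. -/
theorem stmt_12 (n : ℕ) (g : Fin (n + 2) → ℝ) (hpos : ∀ i, 0 < g i)
    (hinj : Function.Injective g)
    (σ : Equiv.Perm (Fin (n + 2))) (hmono : StrictMono (fun k => g (σ k))) :
    IsUnit (Matrix.of fun i j : Fin (n + 2) => min (g i) (g j)) ∧
    (Matrix.of fun i j : Fin (n + 2) => min (g i) (g j))⁻¹
      = (Rmat n σ)ᵀ * Pmat n g σ * Rmat n σ :=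
  stmt_12_general n g hpos σ hmono
end

section
/- Let n be a positive integer, α > 0, and i a positive integer. Define φ_i(x) = √2·sin((i−1/2)πx), λ_i = 1/((i−1/2)²π²), λ_{n,i} = (n/(αe))^{2n}·λ_i, φ_{n,i}(τ) = (αe/n)^{n/2}·φ_i(τⁿ e^{−ατ}·(αe/n)ⁿ), and ρ(τ) = (1/2)·τ^{n−1} e^{−ατ}·|n − ατ|. Then for every τ₁ ≥ 0, ∫₀^∞ min(τ₁ⁿ e^{−ατ₁}, τ₂ⁿ e^{−ατ₂}) · φ_{n,i}(τ₂) · ρ(τ₂) dτ₂ = λ_{n,i} · φ_{n,i}(τ₁). -/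
open MeasureTheory Real

/-- Eigenvalue `λ_{n,i} = (n/(αe))^{2n} · 1/((i-1/2)²π²)` of the multiple pole spline kernel. -/
noncomputable def lamMS (n : ℕ) (α : ℝ) (i : ℕ) : ℝ :=
  ((n : ℝ) / (α * Real.exp 1)) ^ (2 * n) * (1 / (((i : ℝ) - 1/2) ^ 2 * π ^ 2))

/-- Eigenfunction `φ_{n,i}(τ) = (αe/n)^{n/2} φᵢ(τⁿ e^{-ατ} (αe/n)ⁿ)` with
`φᵢ(x) = √2 sin((i-1/2)πx)`. -/
noncomputable def phiMS (n : ℕ) (α : ℝ) (i : ℕ) (τ : ℝ) : ℝ :=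
  (α * Real.exp 1 / (n : ℝ)) ^ ((n : ℝ) / 2) *
    (Real.sqrt 2 *
      Real.sin (((i : ℝ) - 1/2) * π * (τ ^ n * Real.exp (-α * τ) * (α * Real.exp 1 / (n : ℝ)) ^ n)))

/-- Density `ρ(τ) = (1/2) τ^{n-1} e^{-ατ} |n - ατ|` of the measure `dm`. -/
noncomputable def rhoMS (n : ℕ) (α : ℝ) (τ : ℝ) : ℝ :=
  (1/2) * τ ^ (n - 1) * Real.exp (-α * τ) * |(n : ℝ) - α * τ|

/-!
Write `g τ = τⁿ e^{-ατ}`. On `[0, ∞)` the density is `ρ = |g'| / 2`, and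
`φ_{n,i} = (αe/n)^{n/2} √2 sin (θ g)` with `θ = (i - 1/2) π (αe/n)ⁿ`. The profile `g` rises from
`0` to its peak `M = (n/(αe))ⁿ` on `[0, n/α]` and falls back to `0` on `[n/α, ∞)`, so substituting
`s = g τ` on both branches turns the integral into `∫₀^M min (x, s) (αe/n)^{n/2} √2 sin (θ s) ds`
with `x = g τ₁`. Since `θ M = (i - 1/2) π`, `cos (θ M) = 0`, and then
`∫₀^M min (x, s) sin (θ s) ds = sin (θ x) / θ²` with `1 / θ² = λ_{n,i}`.
-/

open Set Filter Topology

theorem image_Ioi_eq_Ioo_of_strictAntiOn {f : ℝ → ℝ} {b L : ℝ} (hf : ContinuousOn f (Ici b))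
    (hanti : StrictAntiOn f (Ici b)) (hlim : Tendsto f atTop (𝓝 L)) :
    f '' Ioi b = Ioo L (f b) := by
  refine Subset.antisymm ?_ ?_
  · rintro _ ⟨x, hx : b < x, rfl⟩
    have hx' : x ∈ Ici b := mem_Ici.2 hx.le
    have hL : L ≤ f (x + 1) := le_of_tendsto hlim <| eventually_atTop.2
      ⟨x + 1, fun y hy =>
        hanti.antitoneOn (mem_Ici.2 (by linarith)) (mem_Ici.2 (by linarith)) hy⟩
    exact ⟨hL.trans_lt (hanti hx' (mem_Ici.2 (by linarith)) (by linarith)),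
      hanti self_mem_Ici hx' hx⟩
  · exact isPreconnected_Ioi.intermediate_value_Ioo (l₂ := 𝓝[>] b)
      (le_principal_iff.2 (Ioi_mem_atTop b)) inf_le_right (hf.mono Ioi_subset_Ici_self) hlim
      ((hf b self_mem_Ici).mono Ioi_subset_Ici_self)

theorem integral_Ici_abs_deriv_smul_comp_of_unimodal {E : Type*} [NormedAddCommGroup E]
    [NormedSpace ℝ E] {g g' : ℝ → ℝ} {a b : ℝ} (hab : a ≤ b)
    (hg : ∀ x ∈ Ici a, HasDerivAt g (g' x) x) (hmono : StrictMonoOn g (Icc a b))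
    (hanti : StrictAntiOn g (Ici b)) (hlim : Tendsto g atTop (𝓝 (g a))) {f : ℝ → E}
    (hf : IntegrableOn f (Icc (g a) (g b))) :
    ∫ x in Ici a, |g' x| • f (g x) = (2 : ℝ) • ∫ s in Icc (g a) (g b), f s := by
  have hcont : ContinuousOn g (Ici a) := fun x hx => (hg x hx).continuousAt.continuousWithinAt
  have himg₁ : g '' Icc a b = Icc (g a) (g b) :=
    (hcont.mono Icc_subset_Ici_self).image_Icc_of_monotoneOn hab hmono.monotoneOn
  have himg₂ : g '' Ioi b = Ioo (g a) (g b) :=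
    image_Ioi_eq_Ioo_of_strictAntiOn (hcont.mono (Ici_subset_Ici.2 hab)) hanti hlim
  have hder₁ : ∀ x ∈ Icc a b, HasDerivWithinAt g (g' x) (Icc a b) x :=
    fun x hx => (hg x hx.1).hasDerivWithinAt
  have hder₂ : ∀ x ∈ Ioi b, HasDerivWithinAt g (g' x) (Ioi b) x :=
    fun x hx => (hg x (hab.trans hx.le)).hasDerivWithinAt
  have hinj₂ : InjOn g (Ioi b) := hanti.injOn.mono Ioi_subset_Ici_self
  have hint₁ : IntegrableOn (fun x => |g' x| • f (g x)) (Icc a b) :=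
    (integrableOn_image_iff_integrableOn_abs_deriv_smul measurableSet_Icc hder₁ hmono.injOn f).1
      (himg₁ ▸ hf)
  have hint₂ : IntegrableOn (fun x => |g' x| • f (g x)) (Ioi b) :=
    (integrableOn_image_iff_integrableOn_abs_deriv_smul measurableSet_Ioi hder₂ hinj₂ f).1
      (himg₂ ▸ hf.mono_set Ioo_subset_Icc_self)
  rw [← Icc_union_Ioi_eq_Ici hab,
    setIntegral_union ((Iic_disjoint_Ioi le_rfl).mono_left Icc_subset_Iic_self) measurableSet_Ioi
      hint₁ hint₂,
    ← integral_image_eq_integral_abs_deriv_smul measurableSet_Icc hder₁ hmono.injOn,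
    ← integral_image_eq_integral_abs_deriv_smul measurableSet_Ioi hder₂ hinj₂, himg₁, himg₂,
    integral_Icc_eq_integral_Ioo, two_smul]

theorem integral_min_mul_sin {x M θ : ℝ} (hθ : θ ≠ 0) (hx₀ : 0 ≤ x) (hxM : x ≤ M) :
    ∫ s in (0 : ℝ)..M, min x s * sin (θ * s) = sin (θ * x) / θ ^ 2 - x * cos (θ * M) / θ := by
  have hcont : Continuous fun s => min x s * sin (θ * s) := by fun_prop
  rw [← intervalIntegral.integral_add_adjacent_intervals (hcont.intervalIntegrable 0 x)
    (hcont.intervalIntegrable x M)]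
  have hleft : ∫ s in (0 : ℝ)..x, min x s * sin (θ * s) = ∫ s in (0 : ℝ)..x, s * sin (θ * s) :=
    intervalIntegral.integral_congr fun s hs => by
      rw [uIcc_of_le hx₀] at hs
      simp only [min_eq_right hs.2]
  have hright : ∫ s in x..M, min x s * sin (θ * s) = ∫ s in x..M, x * sin (θ * s) :=
    intervalIntegral.integral_congr fun s hs => by
      rw [uIcc_of_le hxM] at hs
      simp only [min_eq_left hs.1]
  have hsin (s : ℝ) : HasDerivAt (fun u => sin (θ * u)) (cos (θ * s) * θ) s := by
    simpa using ((hasDerivAt_id s).const_mul θ).sin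
  have hcos (s : ℝ) : HasDerivAt (fun u => cos (θ * u)) (-sin (θ * s) * θ) s := by
    simpa using ((hasDerivAt_id s).const_mul θ).cos
  have hF (s : ℝ) : HasDerivAt (fun u => sin (θ * u) / θ ^ 2 - u * cos (θ * u) / θ)
      (s * sin (θ * s)) s := by
    refine (((hsin s).div_const (θ ^ 2)).sub
      (((hasDerivAt_id s).mul (hcos s)).div_const θ)).congr_deriv ?_
    simp only [id]
    field_simp
    ring
  have hG (s : ℝ) : HasDerivAt (fun u => -cos (θ * u) / θ) (sin (θ * s)) s := by
    refine ((hcos s).neg.div_const θ).congr_deriv ?_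
    field_simp
  rw [hleft, hright, intervalIntegral.integral_const_mul,
    intervalIntegral.integral_eq_sub_of_hasDerivAt (fun s _ => hF s)
      (Continuous.intervalIntegrable (by fun_prop) _ _),
    intervalIntegral.integral_eq_sub_of_hasDerivAt (fun s _ => hG s)
      (Continuous.intervalIntegrable (by fun_prop) _ _)]
  simp only [mul_zero, sin_zero, cos_zero, zero_div, zero_mul, sub_zero]
  field_simp
  ring

variable {n : ℕ} {α : ℝ}

theorem hasDerivAt_pow_mul_exp_neg_mul (hn : n ≠ 0) (τ : ℝ) :
    HasDerivAt (fun t => t ^ n * exp (-α * t)) (τ ^ (n - 1) * exp (-α * τ) * (n - α * τ)) τ := by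
  refine ((hasDerivAt_pow n τ).mul ((hasDerivAt_id τ).const_mul (-α)).exp).congr_deriv ?_
  obtain ⟨m, rfl⟩ := Nat.exists_eq_succ_of_ne_zero hn
  simp only [id, Nat.succ_sub_one, Nat.cast_succ, pow_succ]
  ring

theorem strictMonoOn_pow_mul_exp_neg_mul (hn : n ≠ 0) (hα : 0 < α) :
    StrictMonoOn (fun t => t ^ n * exp (-α * t)) (Icc 0 (n / α)) := by
  refine strictMonoOn_of_deriv_pos (convex_Icc _ _) (by fun_prop) fun τ hτ => ?_
  rw [interior_Icc] at hτ
  rw [(hasDerivAt_pow_mul_exp_neg_mul hn τ).deriv]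
  have hτ₀ : 0 < τ := hτ.1
  have hατ : α * τ < n := (lt_div_iff₀' hα).1 hτ.2
  exact mul_pos (by positivity) (by linarith)

theorem strictAntiOn_pow_mul_exp_neg_mul (hn : n ≠ 0) (hα : 0 < α) :
    StrictAntiOn (fun t => t ^ n * exp (-α * t)) (Ici (n / α)) := by
  refine strictAntiOn_of_deriv_neg (convex_Ici _) (by fun_prop) fun τ hτ => ?_
  rw [interior_Ici] at hτ
  rw [(hasDerivAt_pow_mul_exp_neg_mul hn τ).deriv]
  have hτ₀ : 0 < τ := (div_nonneg n.cast_nonneg hα.le).trans_lt hτ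
  have hατ : (n : ℝ) < α * τ := (div_lt_iff₀' hα).1 hτ
  exact mul_neg_of_pos_of_neg (by positivity) (by linarith)

variable (n) in
theorem tendsto_pow_mul_exp_neg_mul_atTop_nhds_zero (hα : 0 < α) :
    Tendsto (fun t => t ^ n * exp (-α * t)) atTop (𝓝 0) := by
  simpa only [rpow_natCast] using tendsto_rpow_mul_exp_neg_mul_atTop_nhds_zero n α hα

variable (n) in
theorem pow_mul_exp_neg_mul_div (hα : α ≠ 0) :
    (n / α) ^ n * exp (-α * (n / α)) = (n / (α * exp 1)) ^ n := by
  rw [neg_mul, mul_div_cancel₀ _ hα, exp_neg, ← exp_one_pow, div_mul_eq_div_div, div_pow (n / α),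
    div_eq_mul_inv _ (exp 1 ^ n)]

theorem rhoMS_eq {τ : ℝ} (hτ : 0 ≤ τ) :
    rhoMS n α τ = |τ ^ (n - 1) * exp (-α * τ) * (n - α * τ)| / 2 := by
  rw [rhoMS, abs_mul, abs_mul, abs_of_nonneg (pow_nonneg hτ _), abs_of_pos (exp_pos _)]
  ring

noncomputable def freqMS (n : ℕ) (α : ℝ) (i : ℕ) : ℝ :=
  ((i : ℝ) - 1 / 2) * π * (α * exp 1 / n) ^ n

theorem phiMS_eq (i : ℕ) (τ : ℝ) :
    phiMS n α i τ = (α * exp 1 / n) ^ ((n : ℝ) / 2) *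
      (√2 * sin (freqMS n α i * (τ ^ n * exp (-α * τ)))) := by
  rw [phiMS, freqMS]
  ring_nf

variable (n) in
theorem div_pow_mul_div_pow_eq_one (hα : α ≠ 0) :
    (α * exp 1 / n) ^ n * (n / (α * exp 1)) ^ n = 1 := by
  rcases eq_or_ne n 0 with rfl | hn
  · simp
  · rw [← mul_pow, div_mul_div_cancel₀', div_self (by exact_mod_cast hn), one_pow]
    positivity

theorem freqMS_ne_zero (i : ℕ) (hα : α ≠ 0) : freqMS n α i ≠ 0 := by
  have hi : (i : ℝ) - 1 / 2 ≠ 0 := by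
    intro h
    have h2i : ((2 * i : ℕ) : ℝ) = 1 := by push_cast; linarith
    have : 2 * i = 1 := by exact_mod_cast h2i
    omega
  have hc : (α * exp 1 / n) ^ n ≠ 0 :=
    left_ne_zero_of_mul_eq_one (div_pow_mul_div_pow_eq_one n hα)
  exact mul_ne_zero (mul_ne_zero hi pi_ne_zero) hc

theorem lamMS_eq (i : ℕ) (hα : α ≠ 0) : lamMS n α i = 1 / freqMS n α i ^ 2 := by
  rw [lamMS, freqMS, pow_mul']
  field_simp
  rw [← mul_pow, mul_comm, div_pow_mul_div_pow_eq_one n hα, one_pow]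

theorem cos_freqMS_mul (i : ℕ) (hα : α ≠ 0) :
    cos (freqMS n α i * (n / (α * exp 1)) ^ n) = 0 := by
  rw [freqMS, mul_assoc, div_pow_mul_div_pow_eq_one n hα, mul_one, sub_mul, one_div_mul_eq_div,
    cos_sub_pi_div_two, sin_nat_mul_pi]

theorem stmt_16_general (n : ℕ) (hn : 1 ≤ n) (α : ℝ) (hα : 0 < α) (i : ℕ)
    (τ₁ : ℝ) (hτ₁ : 0 ≤ τ₁) :
    ∫ τ₂ in Set.Ici (0 : ℝ),
        min (τ₁ ^ n * Real.exp (-α * τ₁)) (τ₂ ^ n * Real.exp (-α * τ₂)) *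
          phiMS n α i τ₂ * rhoMS n α τ₂
      = lamMS n α i * phiMS n α i τ₁ := by
  set g : ℝ → ℝ := fun t => t ^ n * exp (-α * t)
  set x := g τ₁
  set θ := freqMS n α i
  set C := (α * exp 1 / n) ^ ((n : ℝ) / 2)
  have hn₀ : n ≠ 0 := by omega
  have hmono := strictMonoOn_pow_mul_exp_neg_mul hn₀ hα
  have hanti := strictAntiOn_pow_mul_exp_neg_mul hn₀ hα
  have hg₀ : g 0 = 0 := by simp [g, hn₀]
  have hpeak : g (n / α) = (n / (α * exp 1)) ^ n := pow_mul_exp_neg_mul_div n hα.ne'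
  have hlim : Tendsto g atTop (𝓝 (g 0)) := by
    rw [hg₀]
    exact tendsto_pow_mul_exp_neg_mul_atTop_nhds_zero n hα
  have hb : (0 : ℝ) ≤ n / α := by positivity
  have hx₀ : 0 ≤ x := by positivity
  have hxM : x ≤ g (n / α) := by
    rcases le_total τ₁ (n / α) with h | h
    · exact hmono.monotoneOn ⟨hτ₁, h⟩ ⟨hb, le_rfl⟩ h
    · exact hanti.antitoneOn self_mem_Ici h h
  have hintegrand : EqOn
      (fun τ₂ => min x (g τ₂) * phiMS n α i τ₂ * rhoMS n α τ₂)
      (fun τ₂ => |τ₂ ^ (n - 1) * exp (-α * τ₂) * (n - α * τ₂)| •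
        (C * √2 / 2 * (min x (g τ₂) * sin (θ * g τ₂)))) (Ici 0) := fun τ hτ => by
    simp only [phiMS_eq, rhoMS_eq hτ, smul_eq_mul]
    ring
  rw [setIntegral_congr_fun measurableSet_Ici hintegrand,
    integral_Ici_abs_deriv_smul_comp_of_unimodal (g := g)
      (f := fun s => C * √2 / 2 * (min x s * sin (θ * s))) hb
      (fun τ _ => hasDerivAt_pow_mul_exp_neg_mul hn₀ τ) hmono hanti hlim
      (Continuous.integrableOn_Icc (by fun_prop)),
    hg₀, integral_Icc_eq_integral_Ioc, ← intervalIntegral.integral_of_le (hx₀.trans hxM),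
    intervalIntegral.integral_const_mul, integral_min_mul_sin (freqMS_ne_zero i hα.ne') hx₀ hxM,
    hpeak, cos_freqMS_mul i hα.ne', lamMS_eq i hα.ne', phiMS_eq]
  ring

/-- For positive integers `n, i` and `α > 0`, for every `τ₁ ≥ 0`,
`∫₀^∞ min(τ₁ⁿe^{-ατ₁}, τ₂ⁿe^{-ατ₂}) φ_{n,i}(τ₂) ρ(τ₂) dτ₂ = λ_{n,i} φ_{n,i}(τ₁)`. -/
theorem stmt_16 (n : ℕ) (hn : 1 ≤ n) (α : ℝ) (hα : 0 < α) (i : ℕ) (hi : 1 ≤ i)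
    (τ₁ : ℝ) (hτ₁ : 0 ≤ τ₁) :
    ∫ τ₂ in Set.Ici (0 : ℝ),
        min (τ₁ ^ n * Real.exp (-α * τ₁)) (τ₂ ^ n * Real.exp (-α * τ₂)) *
          phiMS n α i τ₂ * rhoMS n α τ₂
      = lamMS n α i * phiMS n α i τ₁ :=
  stmt_16_general n hn α hα i τ₁ hτ₁
end

section
/- Let n be a positive integer and α > 0. With λ_{n,i} = (n/(αe))^{2n}/((i−1/2)²π²) and φ_{n,i}(τ) = (αe/n)^{n/2}·√2·sin((i−1/2)π·τⁿ e^{−ατ}·(αe/n)ⁿ), the series Σ_{i=1}^∞ λ_{n,i} φ_{n,i}(τ₁) φ_{n,i}(τ₂) converges absolutely for every (τ₁,τ₂) ∈ [0,∞)×[0,∞), the partial sums converge uniformly on [0,∞)×[0,∞), and the sum equals min(τ₁ⁿ e^{−ατ₁}, τ₂ⁿ e^{−ατ₂}). -/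
/-!
Put `u(τ) = τⁿ e^{-ατ} (αe/n)ⁿ`; it lies in `[0, 1]` because `τⁿ e^{-ατ}` peaks at `τ = n/α` with
value `(n/(αe))ⁿ`. With `ω_k = (k + 1/2)π`, the `k`-th term of the series is
`(n/(αe))ⁿ · 2 sin(ω_k u₁) sin(ω_k u₂) / ω_k²`. By the product-to-sum formula this is a difference
of two values of the cosine series `∑ cos(ω_k s) / ω_k² = (1 - |s|)/2` (`|s| ≤ 2`), the
odd-frequency part of the Fourier series of the Bernoulli polynomial `B₂`, and that difference is
`min(u₁, u₂)`. The terms are bounded by a constant times `ω_k⁻²`, so the Weierstrass M-test gives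
absolute and uniform convergence.
-/

open MeasureTheory Real Filter

open Set

lemma hasSum_cos_div_sq {x : ℝ} (hx : x ∈ Icc (0 : ℝ) 1) :
    HasSum (fun n : ℕ => 1 / (n : ℝ) ^ 2 * cos (2 * π * n * x)) (π ^ 2 * (x ^ 2 - x + 1 / 6)) := by
  convert hasSum_one_div_nat_pow_mul_cos one_ne_zero hx using 1
  · rfl
  · rw [show 2 * 1 = 2 from rfl, ← bernoulliFun, bernoulliFun_two, Nat.factorial_two]
    ring

lemma hasSum_cos_odd_div_sq {x : ℝ} (hx : x ∈ Icc (0 : ℝ) (1 / 2)) :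
    HasSum (fun k : ℕ => 1 / (2 * k + 1 : ℝ) ^ 2 * cos (2 * π * (2 * k + 1) * x))
      (π ^ 2 * (1 / 8 - x / 2)) := by
  obtain ⟨hx0, hx1⟩ := hx
  set f : ℕ → ℝ := fun n => 1 / (n : ℝ) ^ 2 * cos (2 * π * n * x)
  have hall : HasSum f (π ^ 2 * (x ^ 2 - x + 1 / 6)) := hasSum_cos_div_sq ⟨hx0, by linarith⟩
  have heven : HasSum (fun k => f (2 * k)) (π ^ 2 * ((2 * x) ^ 2 - 2 * x + 1 / 6) / 4) := by
    convert (hasSum_cos_div_sq (x := 2 * x) ⟨by linarith, by linarith⟩).div_const 4 using 1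
    · rfl
    · funext k
      simp only [f]
      push_cast
      ring_nf
  have hodd : HasSum (fun k => f (2 * k + 1)) (∑' k, f (2 * k + 1)) :=
    (hall.summable.comp_injective fun a b h => by omega).hasSum
  have hsplit := hall.unique (heven.even_add_odd hodd)
  convert hodd using 1
  · simp only [f]
    push_cast
    rfl
  · linarith

lemma hasSum_cos_half_odd_div_sq {s : ℝ} (hs : |s| ≤ 2) :
    HasSum (fun k : ℕ => cos ((k + 1 / 2) * π * s) / ((k + 1 / 2) * π) ^ 2) ((1 - |s|) / 2) := by
  have h := (hasSum_cos_odd_div_sq (x := |s| / 4) ⟨by positivity, by linarith⟩).mul_left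
    (4 / π ^ 2)
  have hterm (k : ℕ) : cos ((k + 1 / 2) * π * s) / ((k + 1 / 2) * π) ^ 2 =
      4 / π ^ 2 * (1 / (2 * k + 1) ^ 2 * cos (2 * π * (2 * k + 1) * (|s| / 4))) := by
    rw [← cos_abs, abs_mul, abs_of_nonneg (by positivity : (0 : ℝ) ≤ (k + 1 / 2) * π)]
    field_simp
    ring_nf
  rw [funext hterm, show (1 - |s|) / 2 = 4 / π ^ 2 * (π ^ 2 * (1 / 8 - |s| / 4 / 2)) by
    field_simp; ring]
  exact h

lemma hasSum_sin_mul_sin_div_sq {x y : ℝ} (hx : x ∈ Icc (0 : ℝ) 1) (hy : y ∈ Icc (0 : ℝ) 1) :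
    HasSum (fun k : ℕ =>
        2 * sin ((k + 1 / 2) * π * x) * sin ((k + 1 / 2) * π * y) / ((k + 1 / 2) * π) ^ 2)
      (min x y) := by
  obtain ⟨hx0, hx1⟩ := hx
  obtain ⟨hy0, hy1⟩ := hy
  have h := (hasSum_cos_half_odd_div_sq (s := x - y) (abs_le.2 ⟨by linarith, by linarith⟩)).sub
    (hasSum_cos_half_odd_div_sq (s := x + y) (abs_le.2 ⟨by linarith, by linarith⟩))
  have hterm (k : ℕ) :
      2 * sin ((k + 1 / 2) * π * x) * sin ((k + 1 / 2) * π * y) / ((k + 1 / 2) * π) ^ 2 =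
      cos ((k + 1 / 2) * π * (x - y)) / ((k + 1 / 2) * π) ^ 2 -
        cos ((k + 1 / 2) * π * (x + y)) / ((k + 1 / 2) * π) ^ 2 := by
    set a : ℝ := (k + 1 / 2) * π
    rw [div_sub_div_same, cos_sub_cos, show (a * (x - y) + a * (x + y)) / 2 = a * x by ring,
      show (a * (x - y) - a * (x + y)) / 2 = -(a * y) by ring, sin_neg]
    ring
  have hmin : min x y = (1 - |x - y|) / 2 - (1 - |x + y|) / 2 := by
    rw [abs_of_nonneg (by linarith : 0 ≤ x + y)]
    rcases le_total x y with h' | h'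
    · rw [min_eq_left h', abs_of_nonpos (by linarith)]; ring
    · rw [min_eq_right h', abs_of_nonneg (by linarith)]; ring
  rw [funext hterm, hmin]
  exact h

/-- The maximum of `τ ↦ τⁿ e^{-ατ}` on `[0, ∞)`, attained at `τ = n/α`. -/
noncomputable def peakMS (n : ℕ) (α : ℝ) : ℝ := ((n : ℝ) / (α * exp 1)) ^ n

/-- The kernel's diagonal `K(τ, τ) = τⁿ e^{-ατ}` divided by its maximum; `phiMS n α i τ` is a
multiple of `sin ((i - 1/2) π · normalizedDiagMS n α τ)`. -/
noncomputable def normalizedDiagMS (n : ℕ) (α τ : ℝ) : ℝ :=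
  τ ^ n * exp (-α * τ) * (α * exp 1 / n) ^ n

lemma peakMS_pos (n : ℕ) {α : ℝ} (hα : 0 < α) : 0 < peakMS n α := by
  rcases n.eq_zero_or_pos with rfl | hn
  · simp [peakMS]
  · unfold peakMS
    positivity

lemma inv_peakMS (n : ℕ) (α : ℝ) : (peakMS n α)⁻¹ = (α * exp 1 / n) ^ n := by
  rw [peakMS, ← inv_pow, inv_div]

lemma pow_mul_exp_neg_mul_le_peakMS (n : ℕ) {α τ : ℝ} (hα : 0 < α) (hτ : 0 ≤ τ) :
    τ ^ n * exp (-α * τ) ≤ peakMS n α := by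
  rcases n.eq_zero_or_pos with rfl | hn
  · simpa [peakMS] using exp_le_one_iff.2 (by nlinarith : -α * τ ≤ 0)
  have hn' : (0 : ℝ) < n := Nat.cast_pos.2 hn
  have hbase : τ * exp (-(α * τ / n)) ≤ n / (α * exp 1) := by
    calc τ * exp (-(α * τ / n)) = n / α * (α * τ / n * exp (-(α * τ / n))) := by
          field_simp
      _ ≤ n / α * exp (-1) := by gcongr; exact mul_exp_neg_le_exp_neg_one _
      _ = n / (α * exp 1) := by rw [exp_neg]; field_simp
  calc τ ^ n * exp (-α * τ) = (τ * exp (-(α * τ / n))) ^ n := by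
        rw [mul_pow, ← exp_nat_mul]
        field_simp
    _ ≤ peakMS n α := pow_le_pow_left₀ (by positivity) hbase n

lemma normalizedDiagMS_mem_Icc (n : ℕ) {α τ : ℝ} (hα : 0 < α) (hτ : 0 ≤ τ) :
    normalizedDiagMS n α τ ∈ Icc (0 : ℝ) 1 := by
  rw [normalizedDiagMS, ← inv_peakMS, ← div_eq_mul_inv]
  exact ⟨div_nonneg (mul_nonneg (pow_nonneg hτ n) (exp_pos _).le) (peakMS_pos n hα).le,
    div_le_one_of_le₀ (pow_mul_exp_neg_mul_le_peakMS n hα hτ) (peakMS_pos n hα).le⟩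

lemma lamMS_mul_phiMS_mul_phiMS (n k : ℕ) {α : ℝ} (hα : 0 < α) (τ₁ τ₂ : ℝ) :
    lamMS n α (k + 1) * phiMS n α (k + 1) τ₁ * phiMS n α (k + 1) τ₂ =
      peakMS n α * (2 * sin ((k + 1 / 2) * π * normalizedDiagMS n α τ₁) *
        sin ((k + 1 / 2) * π * normalizedDiagMS n α τ₂) / ((k + 1 / 2) * π) ^ 2) := by
  have hR :
      (α * exp 1 / n) ^ ((n : ℝ) / 2) * (α * exp 1 / n) ^ ((n : ℝ) / 2) = (peakMS n α)⁻¹ := by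
    rw [← rpow_add_of_nonneg (by positivity) (by positivity) (by positivity), add_halves,
      rpow_natCast, inv_peakMS]
  have hsqrt : √2 * √2 = 2 := mul_self_sqrt zero_le_two
  have hMM : peakMS n α * (peakMS n α)⁻¹ = 1 := mul_inv_cancel₀ (peakMS_pos n hα).ne'
  have hcast : ((k + 1 : ℕ) : ℝ) - 1 / 2 = k + 1 / 2 := by push_cast; ring
  simp only [lamMS, phiMS, hcast, pow_mul']
  rw [← peakMS, ← normalizedDiagMS, ← normalizedDiagMS]
  set M := peakMS n α
  set s₁ := sin ((k + 1 / 2) * π * normalizedDiagMS n α τ₁)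
  set s₂ := sin ((k + 1 / 2) * π * normalizedDiagMS n α τ₂)
  set X := s₁ * s₂ / ((k + 1 / 2) * π) ^ 2
  linear_combination (M ^ 2 * X * √2 * √2) * hR + (M * X) * hsqrt + (M * X * √2 * √2) * hMM

lemma hasSum_lamMS_mul_phiMS_mul_phiMS (n : ℕ) {α τ₁ τ₂ : ℝ} (hα : 0 < α) (hτ₁ : 0 ≤ τ₁)
    (hτ₂ : 0 ≤ τ₂) :
    HasSum (fun k : ℕ => lamMS n α (k + 1) * phiMS n α (k + 1) τ₁ * phiMS n α (k + 1) τ₂)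
      (min (τ₁ ^ n * exp (-α * τ₁)) (τ₂ ^ n * exp (-α * τ₂))) := by
  have hmin : min (τ₁ ^ n * exp (-α * τ₁)) (τ₂ ^ n * exp (-α * τ₂)) =
      peakMS n α * min (normalizedDiagMS n α τ₁) (normalizedDiagMS n α τ₂) := by
    rw [normalizedDiagMS, normalizedDiagMS, ← inv_peakMS,
      ← min_mul_of_nonneg _ _ (inv_pos.2 (peakMS_pos n hα)).le, mul_comm (peakMS n α),
      inv_mul_cancel_right₀ (peakMS_pos n hα).ne']
  rw [funext fun k => lamMS_mul_phiMS_mul_phiMS n k hα τ₁ τ₂, hmin]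
  exact (hasSum_sin_mul_sin_div_sq (normalizedDiagMS_mem_Icc n hα hτ₁)
    (normalizedDiagMS_mem_Icc n hα hτ₂)).mul_left _

lemma abs_lamMS_mul_phiMS_mul_phiMS_le (n k : ℕ) {α : ℝ} (hα : 0 < α) (τ₁ τ₂ : ℝ) :
    |lamMS n α (k + 1) * phiMS n α (k + 1) τ₁ * phiMS n α (k + 1) τ₂| ≤
      peakMS n α * (2 / ((k + 1 / 2) * π) ^ 2) := by
  set s₁ := sin ((k + 1 / 2) * π * normalizedDiagMS n α τ₁)
  set s₂ := sin ((k + 1 / 2) * π * normalizedDiagMS n α τ₂)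
  have hs : |2 * s₁ * s₂| ≤ 2 := by
    rw [abs_mul, abs_mul, abs_two]
    calc 2 * |s₁| * |s₂| ≤ 2 * 1 * 1 := by gcongr <;> exact abs_sin_le_one _
      _ = 2 := by ring
  rw [lamMS_mul_phiMS_mul_phiMS n k hα, abs_mul, abs_of_pos (peakMS_pos n hα), abs_div,
    abs_of_pos (by positivity : (0 : ℝ) < ((k + 1 / 2) * π) ^ 2)]
  gcongr
  exact (peakMS_pos n hα).le

theorem stmt_18_general (n : ℕ) (α : ℝ) (hα : 0 < α) :
    (∀ τ₁ ∈ Set.Ici (0 : ℝ), ∀ τ₂ ∈ Set.Ici (0 : ℝ),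
      Summable fun k : ℕ => |lamMS n α (k + 1) * phiMS n α (k + 1) τ₁ * phiMS n α (k + 1) τ₂|) ∧
    TendstoUniformlyOn
      (fun (N : ℕ) (p : ℝ × ℝ) =>
        ∑ k ∈ Finset.range N, lamMS n α (k + 1) * phiMS n α (k + 1) p.1 * phiMS n α (k + 1) p.2)
      (fun p : ℝ × ℝ =>
        min (p.1 ^ n * Real.exp (-α * p.1)) (p.2 ^ n * Real.exp (-α * p.2)))
      atTop (Set.Ici (0 : ℝ) ×ˢ Set.Ici (0 : ℝ)) ∧
    (∀ τ₁ ∈ Set.Ici (0 : ℝ), ∀ τ₂ ∈ Set.Ici (0 : ℝ),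
      ∑' k : ℕ, lamMS n α (k + 1) * phiMS n α (k + 1) τ₁ * phiMS n α (k + 1) τ₂
        = min (τ₁ ^ n * Real.exp (-α * τ₁)) (τ₂ ^ n * Real.exp (-α * τ₂))) := by
  have hmajorant : Summable fun k : ℕ => peakMS n α * (2 / ((k + 1 / 2) * π) ^ 2) := by
    have h := hasSum_cos_half_odd_div_sq (s := 0) (by simp)
    simp only [mul_zero, cos_zero] at h
    simpa only [mul_one_div] using (h.summable.mul_left 2).mul_left (peakMS n α)
  have hle k := abs_lamMS_mul_phiMS_mul_phiMS_le n k hα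
  refine ⟨fun τ₁ _ τ₂ _ => hmajorant.of_nonneg_of_le (fun _ => abs_nonneg _) (hle · τ₁ τ₂), ?_,
    fun τ₁ h₁ τ₂ h₂ => (hasSum_lamMS_mul_phiMS_mul_phiMS n hα h₁ h₂).tsum_eq⟩
  exact (tendstoUniformlyOn_tsum_nat hmajorant fun k p _ => hle k p.1 p.2).congr_right
    fun p hp => (hasSum_lamMS_mul_phiMS_mul_phiMS n hα hp.1 hp.2).tsum_eq

/-- For a positive integer `n` and `α > 0`, the series
`Σ_{i=1}^∞ λ_{n,i} φ_{n,i}(τ₁) φ_{n,i}(τ₂)` (indexed below by `i = k+1`, `k ∈ ℕ`) converges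
absolutely at every `(τ₁,τ₂) ∈ [0,∞)²`, its partial sums converge uniformly on `[0,∞)²`, and
its sum equals `min(τ₁ⁿe^{-ατ₁}, τ₂ⁿe^{-ατ₂})`. -/
theorem stmt_18 (n : ℕ) (hn : 1 ≤ n) (α : ℝ) (hα : 0 < α) :
    (∀ τ₁ ∈ Set.Ici (0 : ℝ), ∀ τ₂ ∈ Set.Ici (0 : ℝ),
      Summable fun k : ℕ => |lamMS n α (k + 1) * phiMS n α (k + 1) τ₁ * phiMS n α (k + 1) τ₂|) ∧
    TendstoUniformlyOn
      (fun (N : ℕ) (p : ℝ × ℝ) =>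
        ∑ k ∈ Finset.range N, lamMS n α (k + 1) * phiMS n α (k + 1) p.1 * phiMS n α (k + 1) p.2)
      (fun p : ℝ × ℝ =>
        min (p.1 ^ n * Real.exp (-α * p.1)) (p.2 ^ n * Real.exp (-α * p.2)))
      atTop (Set.Ici (0 : ℝ) ×ˢ Set.Ici (0 : ℝ)) ∧
    (∀ τ₁ ∈ Set.Ici (0 : ℝ), ∀ τ₂ ∈ Set.Ici (0 : ℝ),
      ∑' k : ℕ, lamMS n α (k + 1) * phiMS n α (k + 1) τ₁ * phiMS n α (k + 1) τ₂
        = min (τ₁ ^ n * Real.exp (-α * τ₁)) (τ₂ ^ n * Real.exp (-α * τ₂))) :=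
  stmt_18_general n α hα
end

section
/- Let N ∈ ℕ, let K be a real symmetric positive semidefinite N×N matrix, let σ > 0, let g* ∈ ℝ^N, and let w = (w₁,…,w_N) be a random vector whose components are independent Gaussian random variables with mean 0 and variance σ². Set S = K + σ²I_N (which is invertible) and ĝ = K S^{−1}(g* + w). Then E[(ĝ − g*)ᵀ(ĝ − g*)] = σ⁴ (g*)ᵀ S^{−2} g* + N σ² + σ⁶ Tr(S^{−2}) − 2σ⁴ Tr(S^{−1}). -/
open MeasureTheory ProbabilityTheory Matrix

/-- The regularization matrix `S = K + σ² I`. -/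
noncomputable def Sreg (N : ℕ) (K : Matrix (Fin N) (Fin N) ℝ) (σ : ℝ) :
    Matrix (Fin N) (Fin N) ℝ :=
  K + σ ^ 2 • (1 : Matrix (Fin N) (Fin N) ℝ)

/-- The regularized estimate `ĝ = K S⁻¹ (g* + w)` evaluated on the noise vector `v`. -/
noncomputable def ghat (N : ℕ) (K : Matrix (Fin N) (Fin N) ℝ) (σ : ℝ)
    (gs v : Fin N → ℝ) : Fin N → ℝ :=
  (K * (Sreg N K σ)⁻¹) *ᵥ (gs + v)

/-!
Since `K S⁻¹ = 1 - σ² S⁻¹`, the error is `ĝ - g* = c + A w` with `c = -σ² S⁻¹ g*` and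
`A = 1 - σ² S⁻¹`. For centred noise with covariance `σ² I` the cross term `2 cᵀ A w` has mean
zero and `E[(A w)ᵀ (A w)] = σ² Tr (Aᵀ A)`; expanding `Tr (Aᵀ A)` with `S⁻¹` symmetric gives
`N - 2σ² Tr S⁻¹ + σ⁴ Tr S⁻²`, while `cᵀ c = σ⁴ g*ᵀ S⁻² g*`.
-/

section WhiteNoise

variable {Ω ι : Type*} [MeasurableSpace Ω] {P : Measure Ω} {w : ι → Ω → ℝ} {s : ℝ}

lemma integral_mul_eq_ite_of_covariance [DecidableEq ι] [IsProbabilityMeasure P]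
    (hL2 : ∀ i, MemLp (w i) 2 P) (hmean : ∀ i, P[w i] = 0)
    (hcov : ∀ i j, cov[w i, w j; P] = if i = j then s else 0) (i j : ι) :
    ∫ ω, w i ω * w j ω ∂P = if i = j then s else 0 := by
  have := covariance_eq_sub (hL2 i) (hL2 j)
  rw [hcov, hmean, hmean, mul_zero, sub_zero] at this
  exact this.symm

variable [Fintype ι]

lemma integrable_dotProduct (hint : ∀ i, Integrable (w i) P) (x : ι → ℝ) :
    Integrable (fun ω ↦ x ⬝ᵥ fun i ↦ w i ω) P :=
  integrable_finsetSum _ fun i _ ↦ (hint i).const_mul (x i)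

lemma integral_dotProduct_eq_zero (hint : ∀ i, Integrable (w i) P) (hmean : ∀ i, P[w i] = 0)
    (x : ι → ℝ) : ∫ ω, x ⬝ᵥ (fun i ↦ w i ω) ∂P = 0 := by
  simp only [dotProduct]
  rw [integral_finsetSum _ fun i _ ↦ (hint i).const_mul _]
  simp [integral_const_mul, hmean]

lemma integrable_dotProduct_mulVec (hL2 : ∀ i, MemLp (w i) 2 P) (M : Matrix ι ι ℝ) :
    Integrable (fun ω ↦ (fun i ↦ w i ω) ⬝ᵥ M *ᵥ fun i ↦ w i ω) P :=
  integrable_finsetSum _ fun i _ ↦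
    (hL2 i).integrable_mul (memLp_finsetSum _ fun j _ ↦ (hL2 j).const_mul (M i j))

lemma integral_dotProduct_mulVec_eq_trace [DecidableEq ι] [IsProbabilityMeasure P]
    (hL2 : ∀ i, MemLp (w i) 2 P) (hmean : ∀ i, P[w i] = 0)
    (hcov : ∀ i j, cov[w i, w j; P] = if i = j then s else 0) (M : Matrix ι ι ℝ) :
    ∫ ω, (fun i ↦ w i ω) ⬝ᵥ M *ᵥ (fun i ↦ w i ω) ∂P = s * M.trace := by
  have hexpand : ∀ ω, (fun i ↦ w i ω) ⬝ᵥ M *ᵥ (fun i ↦ w i ω)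
      = ∑ i, ∑ j, M i j * (w i ω * w j ω) := fun ω ↦ by
    simp only [dotProduct, mulVec, Finset.mul_sum]
    exact Finset.sum_congr rfl fun i _ ↦ Finset.sum_congr rfl fun j _ ↦ by ring
  have hint : ∀ i j, Integrable (fun ω ↦ M i j * (w i ω * w j ω)) P := fun i j ↦
    ((hL2 i).integrable_mul (hL2 j)).const_mul _
  simp only [hexpand]
  rw [integral_finsetSum _ fun i _ ↦ integrable_finsetSum _ fun j _ ↦ hint i j]
  simp_rw [integral_finsetSum _ fun j _ ↦ hint _ j, integral_const_mul,
    integral_mul_eq_ite_of_covariance hL2 hmean hcov, mul_ite, mul_zero, Finset.sum_ite_eq,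
    Finset.mem_univ, if_true, trace, diag, Finset.mul_sum, mul_comm]

lemma integral_add_mulVec_dotProduct_self [DecidableEq ι] [IsProbabilityMeasure P]
    {κ : Type*} [Fintype κ]
    (hL2 : ∀ i, MemLp (w i) 2 P) (hmean : ∀ i, P[w i] = 0)
    (hcov : ∀ i j, cov[w i, w j; P] = if i = j then s else 0) (c : κ → ℝ) (A : Matrix κ ι ℝ) :
    ∫ ω, (c + A *ᵥ fun i ↦ w i ω) ⬝ᵥ (c + A *ᵥ fun i ↦ w i ω) ∂P
      = c ⬝ᵥ c + s * (Aᵀ * A).trace := by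
  have hexpand : ∀ W : ι → ℝ, (c + A *ᵥ W) ⬝ᵥ (c + A *ᵥ W)
      = c ⬝ᵥ c + (2 • (c ᵥ* A)) ⬝ᵥ W + W ⬝ᵥ (Aᵀ * A) *ᵥ W := fun W ↦ by
    rw [← mulVec_mulVec, dotProduct_mulVec, vecMul_transpose, add_dotProduct, dotProduct_add,
      dotProduct_add, dotProduct_comm (A *ᵥ W) c, dotProduct_mulVec, smul_dotProduct]
    ring
  have hlin := integrable_dotProduct (fun i ↦ (hL2 i).integrable one_le_two) (2 • (c ᵥ* A))
  have hquad := integrable_dotProduct_mulVec hL2 (Aᵀ * A)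
  simp_rw [hexpand]
  rw [integral_add ((integrable_const _).fun_add hlin) hquad,
    integral_add (integrable_const _) hlin,
    integral_dotProduct_eq_zero (fun i ↦ (hL2 i).integrable one_le_two) hmean,
    integral_dotProduct_mulVec_eq_trace hL2 hmean hcov, integral_const]
  simp

end WhiteNoise

lemma ProbabilityTheory.HasLaw.memLp {Ω : Type*} [MeasurableSpace Ω] {P : Measure Ω} {X : Ω → ℝ}
    {μ : Measure ℝ} (hX : HasLaw X μ P) {p : ENNReal} (h : MemLp id p μ) : MemLp X p P :=
  (memLp_map_measure_iff aestronglyMeasurable_id hX.aemeasurable).mp (hX.map_eq ▸ h)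

lemma covariance_eq_ite_of_iIndepFun_gaussianReal {Ω ι : Type*} [MeasurableSpace Ω]
    {P : Measure Ω} [IsProbabilityMeasure P] [DecidableEq ι] {w : ι → Ω → ℝ} {μ : ℝ} {v : NNReal}
    (hw : ∀ i, HasLaw (w i) (gaussianReal μ v) P) (hindep : iIndepFun w P) (i j : ι) :
    cov[w i, w j; P] = if i = j then (v : ℝ) else 0 := by
  split_ifs with hij
  · subst hij
    rw [covariance_self (hw i).aemeasurable, (hw i).variance_eq, variance_id_gaussianReal]
  · exact (hindep.indepFun hij).covariance_eq_zero ((hw i).memLp (memLp_id_gaussianReal 2))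
      ((hw j).memLp (memLp_id_gaussianReal 2))

section Regularization

variable {N : ℕ} {K : Matrix (Fin N) (Fin N) ℝ} {σ : ℝ}

lemma posDef_Sreg (hK : K.PosSemidef) (hσ : σ ≠ 0) : (Sreg N K σ).PosDef :=
  PosDef.posSemidef_add hK (PosDef.one.smul (sq_pos_of_ne_zero hσ))

lemma mul_inv_Sreg (hS : IsUnit (Sreg N K σ).det) :
    K * (Sreg N K σ)⁻¹ = 1 - σ ^ 2 • (Sreg N K σ)⁻¹ := by
  rw [eq_sub_iff_add_eq, ← smul_one_mul, ← add_mul]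
  exact mul_nonsing_inv _ hS

lemma ghat_sub (hS : IsUnit (Sreg N K σ).det) (gs v : Fin N → ℝ) :
    ghat N K σ gs v - gs
      = -(σ ^ 2 • (Sreg N K σ)⁻¹ *ᵥ gs) + (1 - σ ^ 2 • (Sreg N K σ)⁻¹) *ᵥ v := by
  rw [ghat, mul_inv_Sreg hS, mulVec_add, sub_mulVec _ _ gs, one_mulVec, smul_mulVec]
  abel

end Regularization

lemma trace_one_sub_smul_sq {n : Type*} [Fintype n] [DecidableEq n] (T : Matrix n n ℝ) (a : ℝ) :
    ((1 - a • T)ᵀ * (1 - a • T)).trace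
      = Fintype.card n - 2 * a * T.trace + a ^ 2 * (Tᵀ * T).trace := by
  simp only [transpose_sub, transpose_one, transpose_smul, sub_mul, mul_sub, one_mul, mul_one,
    smul_mul, Matrix.mul_smul, trace_sub, trace_smul, trace_one, trace_transpose, smul_eq_mul]
  ring

/-- Let `K` be a real symmetric positive semidefinite `N×N` matrix, `σ > 0`,
`g* ∈ ℝ^N`, and `w` a vector of independent Gaussian random variables with mean 0 and
variance `σ²`. With `S = K + σ²I` (invertible) and `ĝ = K S⁻¹ (g* + w)`,
`E[(ĝ-g*)ᵀ(ĝ-g*)] = σ⁴ g*ᵀ S⁻² g* + Nσ² + σ⁶ Tr(S⁻²) - 2σ⁴ Tr(S⁻¹)`. -/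
theorem stmt_19 {Ω : Type*} [MeasurableSpace Ω] (P : Measure Ω) [IsProbabilityMeasure P]
    (N : ℕ) (K : Matrix (Fin N) (Fin N) ℝ) (hK : K.PosSemidef)
    (σ : ℝ) (hσ : 0 < σ) (gs : Fin N → ℝ)
    (w : Fin N → Ω → ℝ) (hmeas : ∀ i, Measurable (w i))
    (hgauss : ∀ i, P.map (w i) = gaussianReal 0 ⟨σ ^ 2, sq_nonneg σ⟩)
    (hindep : iIndepFun w P) :
    IsUnit (Sreg N K σ).det ∧
    (∫ ω, (ghat N K σ gs (fun i => w i ω) - gs) ⬝ᵥ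
          (ghat N K σ gs (fun i => w i ω) - gs) ∂P)
      = σ ^ 4 * (gs ⬝ᵥ ((Sreg N K σ)⁻¹ * (Sreg N K σ)⁻¹) *ᵥ gs)
        + N * σ ^ 2
        + σ ^ 6 * ((Sreg N K σ)⁻¹ * (Sreg N K σ)⁻¹).trace
        - 2 * σ ^ 4 * ((Sreg N K σ)⁻¹).trace := by
  have hSpos := posDef_Sreg hK hσ.ne'
  have hS : IsUnit (Sreg N K σ).det := isUnit_iff_ne_zero.mpr hSpos.det_pos.ne'
  refine ⟨hS, ?_⟩
  have hlaw : ∀ i, HasLaw (w i) (gaussianReal 0 ⟨σ ^ 2, sq_nonneg σ⟩) P :=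
    fun i ↦ ⟨(hmeas i).aemeasurable, hgauss i⟩
  have hL2 : ∀ i, MemLp (w i) 2 P := fun i ↦ (hlaw i).memLp (memLp_id_gaussianReal 2)
  have hmean : ∀ i, P[w i] = 0 := fun i ↦ (hlaw i).integral_eq.trans integral_id_gaussianReal
  simp_rw [ghat_sub hS]
  -- with `σ ^ 2` rather than the coercion of `⟨σ ^ 2, _⟩ : ℝ≥0`, which `ring` cannot see through
  have hcov : ∀ i j, cov[w i, w j; P] = if i = j then σ ^ 2 else 0 :=
    covariance_eq_ite_of_iIndepFun_gaussianReal hlaw hindep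
  rw [integral_add_mulVec_dotProduct_self hL2 hmean hcov]
  set T := (Sreg N K σ)⁻¹
  have hT : Tᵀ = T := (isHermitian_iff_isSymm.mp hSpos.inv.isHermitian).eq
  have hquad : (T *ᵥ gs) ⬝ᵥ (T *ᵥ gs) = gs ⬝ᵥ (T * T) *ᵥ gs := by
    rw [← mulVec_mulVec, dotProduct_mulVec gs T, ← mulVec_transpose, hT]
  rw [trace_one_sub_smul_sq, hT, Fintype.card_fin, neg_dotProduct_neg, smul_dotProduct,
    dotProduct_smul, hquad, smul_eq_mul, smul_eq_mul]
  ring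
end
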